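/- arXiv:1702.06175 — 3 statements merged into one kernel-verified Lean document; each statement's English description precedes it below -/
import Mathlib

section
/- Let K ⊆ ℝ^n be a nonempty closed convex set, x ∈ K, ε > 0, and set E(ε) = {z ∈ K : ‖z − x‖₂ ≤ ε}. Let G : ℝ^n → ℝ^n be a map and α, β > 0 be such that the regularity condition ⟨G(z), z − x⟩ ≥ (1/α)‖z − x‖₂² + (1/β)‖G(z)‖₂² holds for all z ∈ E(ε). Then for any step size μ with 0 < μ ≤ 2/β and any z₀ ∈ E(ε), the iterates z_{τ+1} = P_K(z_τ − μ G(z_τ)), where P_K is the metric projection onto K, satisfy z_τ ∈ E(ε) and ‖z_τ − x‖₂² ≤ (1 − 2μ/α)^τ ‖z₀ − x‖₂² for all τ ≥ 0. -/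
open MeasureTheory ProbabilityTheory Real
open scoped ENNReal RealInnerProductSpace BigOperators

/-- The standard Gaussian measure `N(0, I_n)` on `ℝ^n`. -/
noncomputable def stdGaussian (n : ℕ) : Measure (EuclideanSpace ℝ (Fin n)) :=
  (Measure.pi fun _ : Fin n => gaussianReal 0 1).map
    (MeasurableEquiv.toLp 2 (Fin n → ℝ))

/-- Gaussian width `ω(T) = E[sup_{z ∈ T} ⟨g, z⟩]`, `g ∼ N(0, I_n)`. -/
noncomputable def gaussianWidth {n : ℕ} (T : Set (EuclideanSpace ℝ (Fin n))) : ℝ :=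
  ∫ g, sSup ((fun z => ⟪g, z⟫) '' T) ∂(stdGaussian n)

/-- Joint law of `m` independent `N(0, I_n)` measurement vectors. -/
noncomputable def vecMeas (n m : ℕ) : Measure (Fin m → EuclideanSpace ℝ (Fin n)) :=
  Measure.pi fun _ => stdGaussian n

/-- `C` is a cone: closed under multiplication by nonnegative scalars. -/
def IsCone {n : ℕ} (C : Set (EuclideanSpace ℝ (Fin n))) : Prop :=
  ∀ t : ℝ, 0 ≤ t → ∀ h ∈ C, t • h ∈ C

/-- `dist(z, x) = min(‖z − x‖₂, ‖z + x‖₂)`. -/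
noncomputable def pdist {n : ℕ} (z x : EuclideanSpace ℝ (Fin n)) : ℝ :=
  min ‖z - x‖ ‖z + x‖

/-- `p` is a nearest point of the set `K` to `v` (a metric projection of `v` onto `K`). -/
def NearestPt {n : ℕ} (K : Set (EuclideanSpace ℝ (Fin n)))
    (v p : EuclideanSpace ℝ (Fin n)) : Prop :=
  p ∈ K ∧ ∀ w ∈ K, ‖v - p‖ ≤ ‖v - w‖

/-- `sgn(t) = 1` if `t ≥ 0` and `−1` otherwise. -/
noncomputable def sgn (t : ℝ) : ℝ := if 0 ≤ t then 1 else -1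

/-!
Projection onto a convex set is nonexpansive towards points of the set, so it suffices to bound
the gradient step itself. Expanding `‖w - μ G w - x‖²` and inserting the regularity condition
(with `μ² ≤ 2μ/β` absorbing the `‖G w‖²` term) gives the contraction factor `1 - 2μ/α`, which
is at most `1`; hence the iterates stay in `E(ε)` and the bound follows by induction.
-/

section NearestPoint

variable {F : Type*} [NormedAddCommGroup F] [InnerProductSpace ℝ F] {K : Set F} {v p x : F}

theorem Convex.real_inner_sub_nonpos_of_forall_norm_sub_le (hK : Convex ℝ K) (hp : p ∈ K)
    (hmin : ∀ w ∈ K, ‖v - p‖ ≤ ‖v - w‖) (hx : x ∈ K) : ⟪v - p, x - p⟫ ≤ 0 := by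
  have : Nonempty K := ⟨⟨p, hp⟩⟩
  have hinf : ‖v - p‖ = ⨅ w : K, ‖v - w‖ :=
    le_antisymm (le_ciInf fun w => hmin w w.2)
      (ciInf_le ⟨0, fun _ ⟨_, h⟩ => h ▸ norm_nonneg _⟩ (⟨p, hp⟩ : K))
  exact (norm_eq_iInf_iff_real_inner_le_zero hK hp).1 hinf x hx

theorem Convex.norm_sub_le_of_forall_norm_sub_le (hK : Convex ℝ K) (hp : p ∈ K)
    (hmin : ∀ w ∈ K, ‖v - p‖ ≤ ‖v - w‖) (hx : x ∈ K) : ‖p - x‖ ≤ ‖v - x‖ := by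
  have hinner : 0 ≤ ⟪v - p, p - x⟫ := by
    rw [← neg_sub x p, inner_neg_right, neg_nonneg]
    exact hK.real_inner_sub_nonpos_of_forall_norm_sub_le hp hmin hx
  have hexpand : ‖v - x‖ ^ 2 = ‖v - p‖ ^ 2 + 2 * ⟪v - p, p - x⟫ + ‖p - x‖ ^ 2 := by
    rw [← norm_add_sq_real, sub_add_sub_cancel]
  refine (pow_le_pow_iff_left₀ (norm_nonneg _) (norm_nonneg _) two_ne_zero).1 ?_
  nlinarith [sq_nonneg ‖v - p‖]

end NearestPoint

theorem sq_norm_sub_smul_sub_le {F : Type*} [NormedAddCommGroup F] [InnerProductSpace ℝ F]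
    {w x g : F} {α β μ : ℝ} (hμ0 : 0 ≤ μ) (hμ : μ ≤ 2 / β)
    (hreg : ⟪g, w - x⟫ ≥ (1 / α) * ‖w - x‖ ^ 2 + (1 / β) * ‖g‖ ^ 2) :
    ‖w - μ • g - x‖ ^ 2 ≤ (1 - 2 * μ / α) * ‖w - x‖ ^ 2 := by
  have hexpand : ‖w - μ • g - x‖ ^ 2 = ‖w - x‖ ^ 2 - 2 * μ * ⟪g, w - x⟫ + μ ^ 2 * ‖g‖ ^ 2 := by
    rw [sub_right_comm, norm_sub_sq_real, real_inner_smul_right, real_inner_comm, norm_smul,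
      Real.norm_of_nonneg hμ0]
    ring
  have hμsq : μ ^ 2 * ‖g‖ ^ 2 ≤ 2 * μ * ((1 / β) * ‖g‖ ^ 2) := by
    have : μ * μ ≤ μ * (2 / β) := mul_le_mul_of_nonneg_left hμ hμ0
    calc μ ^ 2 * ‖g‖ ^ 2 = (μ * μ) * ‖g‖ ^ 2 := by ring
      _ ≤ μ * (2 / β) * ‖g‖ ^ 2 := mul_le_mul_of_nonneg_right this (sq_nonneg _)
      _ = 2 * μ * ((1 / β) * ‖g‖ ^ 2) := by ring
  have hinner := mul_le_mul_of_nonneg_left hreg (by positivity : (0 : ℝ) ≤ 2 * μ)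
  rw [hexpand, sub_mul, one_mul,
    show 2 * μ / α * ‖w - x‖ ^ 2 = 2 * μ * (1 / α * ‖w - x‖ ^ 2) by ring]
  linarith

theorem statement2_general (n : ℕ) (K : Set (EuclideanSpace ℝ (Fin n)))
    (hKcvx : Convex ℝ K)
    (x : EuclideanSpace ℝ (Fin n)) (hx : x ∈ K) (ε : ℝ)
    (G : EuclideanSpace ℝ (Fin n) → EuclideanSpace ℝ (Fin n))
    (α β : ℝ) (hα : 0 < α)
    -- regularity condition on `E(ε) = {z ∈ K : ‖z − x‖ ≤ ε}`
    (hreg : ∀ z ∈ K, ‖z - x‖ ≤ ε →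
      ⟪G z, z - x⟫ ≥ (1 / α) * ‖z - x‖ ^ 2 + (1 / β) * ‖G z‖ ^ 2)
    (μ : ℝ) (hμ0 : 0 < μ) (hμ : μ ≤ 2 / β)
    (z : ℕ → EuclideanSpace ℝ (Fin n))
    (hz0K : z 0 ∈ K) (hz0 : ‖z 0 - x‖ ≤ ε)
    -- iterates `z_{τ+1} = P_K(z_τ − μ G(z_τ))`
    (hiter : ∀ τ : ℕ, NearestPt K (z τ - μ • G (z τ)) (z (τ + 1))) :
    ∀ τ : ℕ, (z τ ∈ K ∧ ‖z τ - x‖ ≤ ε) ∧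
      ‖z τ - x‖ ^ 2 ≤ (1 - 2 * μ / α) ^ τ * ‖z 0 - x‖ ^ 2 := by
  set c := 1 - 2 * μ / α
  have hc : c ≤ 1 := by linarith [show 0 ≤ 2 * μ / α by positivity]
  have step : ∀ τ, z τ ∈ K → ‖z τ - x‖ ≤ ε → ‖z (τ + 1) - x‖ ^ 2 ≤ c * ‖z τ - x‖ ^ 2 :=
    fun τ hK hε => (pow_le_pow_left₀ (norm_nonneg _)
      (hKcvx.norm_sub_le_of_forall_norm_sub_le (hiter τ).1 (hiter τ).2 hx) 2).trans
      (sq_norm_sub_smul_sub_le hμ0.le hμ (hreg _ hK hε))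
  intro τ
  induction τ with
  | zero => exact ⟨⟨hz0K, hz0⟩, by simp⟩
  | succ k ih =>
    obtain ⟨⟨hkK, hkε⟩, hk⟩ := ih
    have hstep := step k hkK hkε
    refine ⟨⟨(hiter k).1, ?_⟩, hstep.trans ?_⟩
    · have : ‖z (k + 1) - x‖ ^ 2 ≤ ‖z k - x‖ ^ 2 :=
        hstep.trans (mul_le_of_le_one_left (sq_nonneg _) hc)
      exact ((pow_le_pow_iff_left₀ (norm_nonneg _) (norm_nonneg _) two_ne_zero).1 this).trans hkε
    rw [pow_succ' c k, mul_assoc]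
    rcases le_or_gt 0 c with hc0 | hc0
    · exact mul_le_mul_of_nonneg_left hk hc0
    -- a negative factor is only possible if `z 0 = x`, since it bounds a square at `τ = 0`
    have hz0x : ‖z 0 - x‖ ^ 2 = 0 :=
      le_antisymm (nonpos_of_mul_nonneg_right ((sq_nonneg _).trans (step 0 hz0K hz0)) hc0)
        (sq_nonneg _)
    rw [hz0x, mul_zero, mul_zero]
    exact mul_nonpos_of_nonpos_of_nonneg hc0.le (sq_nonneg _)

/-- Lemma: convergence of projected gradient descent under the regularity
condition. -/
theorem statement2 (n : ℕ) (K : Set (EuclideanSpace ℝ (Fin n))) (hKne : K.Nonempty)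
    (hKcl : IsClosed K) (hKcvx : Convex ℝ K)
    (x : EuclideanSpace ℝ (Fin n)) (hx : x ∈ K) (ε : ℝ) (hε : 0 < ε)
    (G : EuclideanSpace ℝ (Fin n) → EuclideanSpace ℝ (Fin n))
    (α β : ℝ) (hα : 0 < α) (hβ : 0 < β)
    -- regularity condition on `E(ε) = {z ∈ K : ‖z − x‖ ≤ ε}`
    (hreg : ∀ z ∈ K, ‖z - x‖ ≤ ε →
      ⟪G z, z - x⟫ ≥ (1 / α) * ‖z - x‖ ^ 2 + (1 / β) * ‖G z‖ ^ 2)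
    (μ : ℝ) (hμ0 : 0 < μ) (hμ : μ ≤ 2 / β)
    (z : ℕ → EuclideanSpace ℝ (Fin n))
    (hz0K : z 0 ∈ K) (hz0 : ‖z 0 - x‖ ≤ ε)
    -- iterates `z_{τ+1} = P_K(z_τ − μ G(z_τ))`
    (hiter : ∀ τ : ℕ, NearestPt K (z τ - μ • G (z τ)) (z (τ + 1))) :
    ∀ τ : ℕ, (z τ ∈ K ∧ ‖z τ - x‖ ≤ ε) ∧
      ‖z τ - x‖ ^ 2 ≤ (1 - 2 * μ / α) ^ τ * ‖z 0 - x‖ ^ 2 :=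
  statement2_general n K hKcvx x hx ε G α β hα hreg μ hμ0 hμ z hz0K hz0 hiter
end

section
/- Let D ⊆ ℝ^n be a nonempty closed set containing 0, and let C ⊆ ℝ^n be a nonempty closed cone with D ⊆ C. Fix v ∈ ℝ^n, let p_D be any nearest point of D to v and p_C any nearest point of C to v (in Euclidean norm). Then ‖p_D‖₂ ≤ 2 ‖p_C‖₂. If moreover D is convex, then ‖p_D‖₂ ≤ ‖p_C‖₂. -/
open MeasureTheory ProbabilityTheory Real
open scoped ENNReal RealInnerProductSpace BigOperators

/-!
Write `p_C`, `p_D` for the two projections. Since `C` is a cone, `p_C` is also the projection of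
`v` onto the ray through `p_C`, which forces `⟪v, p_C⟫ = ‖p_C‖²`; comparing with the projection of
`v` onto the ray through an arbitrary `w ∈ C` then gives `⟪v, w⟫ ≤ ‖p_C‖ ‖w‖`. On the other side,
`0 ∈ D` gives `‖p_D‖² ≤ 2 ⟪v, p_D⟫`, and for convex `D` the variational inequality at `0` improves
this to `‖p_D‖² ≤ ⟪v, p_D⟫`. Taking `w = p_D` yields both bounds.
-/

section InnerProductSpace

variable {E : Type*} [NormedAddCommGroup E] [InnerProductSpace ℝ E]

theorem norm_sq_mul_norm_sub_smul_sq (v w : E) :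
    ‖w‖ ^ 2 * ‖v - (⟪v, w⟫ / ‖w‖ ^ 2) • w‖ ^ 2 = ‖w‖ ^ 2 * ‖v‖ ^ 2 - ⟪v, w⟫ ^ 2 := by
  rcases eq_or_ne w 0 with rfl | hw
  · simp
  have hw' : ‖w‖ ≠ 0 := norm_ne_zero_iff.2 hw
  rw [norm_sub_sq_real, real_inner_smul_right, norm_smul, Real.norm_eq_abs, mul_pow, sq_abs]
  field_simp
  ring

theorem sq_inner_le_of_le_norm_sub_smul {v w : E} {r : ℝ} (hr : 0 ≤ r) (hvw : 0 ≤ ⟪v, w⟫)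
    (h : ∀ t : ℝ, 0 ≤ t → r ≤ ‖v - t • w‖) : ⟪v, w⟫ ^ 2 ≤ ‖w‖ ^ 2 * (‖v‖ ^ 2 - r ^ 2) := by
  have hr_sq := pow_le_pow_left₀ hr (h _ (div_nonneg hvw (sq_nonneg ‖w‖))) 2
  nlinarith [norm_sq_mul_norm_sub_smul_sq v w, mul_le_mul_of_nonneg_left hr_sq (sq_nonneg ‖w‖)]

theorem norm_sq_le_two_inner_of_norm_sub_le {v p : E} (h : ‖v - p‖ ≤ ‖v‖) :
    ‖p‖ ^ 2 ≤ 2 * ⟪v, p⟫ := by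
  have := pow_le_pow_left₀ (norm_nonneg _) h 2
  rw [norm_sub_sq_real] at this
  linarith

theorem norm_sq_le_inner_of_isMinOn_of_convex {K : Set E} {v p : E} (hK : Convex ℝ K)
    (h0 : 0 ∈ K) (hp : p ∈ K) (hmin : IsMinOn (fun w => ‖v - w‖) K p) : ‖p‖ ^ 2 ≤ ⟪v, p⟫ := by
  have : Nonempty K := ⟨⟨p, hp⟩⟩
  have hinf : ‖v - p‖ = ⨅ w : K, ‖v - w‖ :=
    le_antisymm (le_ciInf fun w => isMinOn_iff.1 hmin w w.2)
      (ciInf_le ⟨0, Set.forall_mem_range.2 fun _ => norm_nonneg _⟩ (⟨p, hp⟩ : K))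
  have := (norm_eq_iInf_iff_real_inner_le_zero hK hp).1 hinf 0 h0
  rw [zero_sub, inner_neg_right, inner_sub_left, real_inner_self_eq_norm_sq] at this
  linarith

theorem inner_eq_norm_sq_of_isMinOn_cone {K : Set E} {v p : E}
    (hK : ∀ t : ℝ, 0 ≤ t → ∀ w ∈ K, t • w ∈ K) (hp : p ∈ K)
    (hmin : IsMinOn (fun w => ‖v - w‖) K p) : ⟪v, p⟫ = ‖p‖ ^ 2 := by
  have h0 : ‖p‖ ^ 2 ≤ 2 * ⟪v, p⟫ := norm_sq_le_two_inner_of_norm_sub_le <| by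
    simpa using isMinOn_iff.1 hmin _ (hK 0 le_rfl p hp)
  have hray := sq_inner_le_of_le_norm_sub_smul (norm_nonneg _) (by nlinarith [sq_nonneg ‖p‖])
    fun t ht => isMinOn_iff.1 hmin _ (hK t ht p hp)
  rw [norm_sub_sq_real] at hray
  nlinarith [sq_nonneg (⟪v, p⟫ - ‖p‖ ^ 2)]

theorem inner_le_norm_mul_norm_of_isMinOn_cone {K : Set E} {v p w : E}
    (hK : ∀ t : ℝ, 0 ≤ t → ∀ w ∈ K, t • w ∈ K) (hp : p ∈ K)
    (hmin : IsMinOn (fun w => ‖v - w‖) K p) (hw : w ∈ K) : ⟪v, w⟫ ≤ ‖p‖ * ‖w‖ := by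
  rcases lt_or_ge ⟪v, w⟫ 0 with hvw | hvw
  · exact hvw.le.trans (by positivity)
  have hray := sq_inner_le_of_le_norm_sub_smul (norm_nonneg _) hvw
    fun t ht => isMinOn_iff.1 hmin _ (hK t ht w hw)
  rw [norm_sub_sq_real, inner_eq_norm_sq_of_isMinOn_cone hK hp hmin] at hray
  nlinarith [mul_nonneg (norm_nonneg p) (norm_nonneg w)]

end InnerProductSpace

theorem statement13_general (n : ℕ) (D C : Set (EuclideanSpace ℝ (Fin n)))
    (hD0 : (0 : EuclideanSpace ℝ (Fin n)) ∈ D)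
    (hCcone : IsCone C) (hDC : D ⊆ C)
    (v pD pC : EuclideanSpace ℝ (Fin n))
    (hpD : NearestPt D v pD) (hpC : NearestPt C v pC) :
    ‖pD‖ ≤ 2 * ‖pC‖ ∧ (Convex ℝ D → ‖pD‖ ≤ ‖pC‖) := by
  have hvpD : ⟪v, pD⟫ ≤ ‖pC‖ * ‖pD‖ :=
    inner_le_norm_mul_norm_of_isMinOn_cone hCcone hpC.1 hpC.2 (hDC hpD.1)
  have hpD_norm := norm_nonneg pD
  have hpC_norm := norm_nonneg pC
  refine ⟨?_, fun hDconv => ?_⟩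
  · have := norm_sq_le_two_inner_of_norm_sub_le (by simpa using hpD.2 0 hD0)
    nlinarith
  · have := norm_sq_le_inner_of_isMinOn_of_convex hDconv hD0 hpD.1 hpD.2
    nlinarith

/-- Lemma: comparison of projections onto a set and onto a cone containing
it. -/
theorem statement13 (n : ℕ) (D C : Set (EuclideanSpace ℝ (Fin n)))
    (hDne : D.Nonempty) (hDcl : IsClosed D) (hD0 : (0 : EuclideanSpace ℝ (Fin n)) ∈ D)
    (hCne : C.Nonempty) (hCcl : IsClosed C) (hCcone : IsCone C) (hDC : D ⊆ C)
    (v pD pC : EuclideanSpace ℝ (Fin n))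
    (hpD : NearestPt D v pD) (hpC : NearestPt C v pC) :
    ‖pD‖ ≤ 2 * ‖pC‖ ∧ (Convex ℝ D → ‖pD‖ ≤ ‖pC‖) :=
  statement13_general n D C hD0 hCcone hDC v pD pC hpD hpC
end

section
/- Fix Δ ∈ (0, 1). For h ∈ ℝ and β ≥ 0 define S(h; β) = 0 if |h| < β(1−Δ); S(h; β) = (1/Δ)(|h| − β(1−Δ)) if β(1−Δ) ≤ |h| ≤ β; and S(h; β) = |h| if |h| > β. For z ∈ ℝ^m and β ∈ ℝ^m with nonnegative entries define f(z; β) = sqrt(Σ_{r=1}^m S(z_r; β_r)²). Then f(·; β) is Lipschitz with constant 1/Δ: for all z, y ∈ ℝ^m, |f(z; β) − f(y; β)| ≤ (1/Δ) ‖z − y‖₂. -/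
open MeasureTheory ProbabilityTheory Real
open scoped ENNReal RealInnerProductSpace BigOperators

/-- The soft truncation map `S(h; β)` with parameter `Δ`. -/
noncomputable def Sfun (Δ h β : ℝ) : ℝ :=
  if |h| < β * (1 - Δ) then 0
  else if |h| ≤ β then (1 / Δ) * (|h| - β * (1 - Δ))
  else |h|

/-! On `|h|`, the map `S(·; β)` is `t ↦ min t (max 0 ((t - β(1 - Δ)) / Δ))`, a min/max of
`1/Δ`-Lipschitz functions when `Δ ≤ 1`. Applied coordinatewise it is therefore `1/Δ`-Lipschitz
for the Euclidean norm, and `f(·; β)` is the norm of that map. -/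

open scoped NNReal

theorem PiLp.lipschitzWith_toLp_map {ι : Type*} [Fintype ι] {α β : ι → Type*}
    [∀ i, SeminormedAddCommGroup (α i)] [∀ i, SeminormedAddCommGroup (β i)] {K : ℝ≥0}
    {φ : ∀ i, α i → β i} (hφ : ∀ i, LipschitzWith K (φ i)) :
    LipschitzWith K fun x : PiLp 2 α => WithLp.toLp 2 fun i => φ i (x i) := by
  refine LipschitzWith.of_dist_le_mul fun x y => ?_
  rw [PiLp.dist_eq_of_L2, PiLp.dist_eq_of_L2, ← Real.sqrt_sq K.coe_nonneg,
    ← Real.sqrt_mul (sq_nonneg _), Finset.mul_sum]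
  gcongr with i
  calc dist (φ i (x i)) (φ i (y i)) ^ 2 ≤ (K * dist (x i) (y i)) ^ 2 := by
        gcongr; exact (hφ i).dist_le_mul _ _
    _ = K ^ 2 * dist (x i) (y i) ^ 2 := mul_pow _ _ _

theorem Sfun_eq_min_max {Δ : ℝ} (hΔ₀ : 0 < Δ) (hΔ₁ : Δ ≤ 1) (h β : ℝ) :
    Sfun Δ h β = min |h| (max 0 ((|h| - β * (1 - Δ)) / Δ)) := by
  unfold Sfun
  split_ifs with hlow hmid
  · rw [max_eq_left (div_nonpos_of_nonpos_of_nonneg (by linarith) hΔ₀.le),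
      min_eq_right (abs_nonneg h)]
  · rw [max_eq_right (div_nonneg (by linarith) hΔ₀.le), min_eq_right, one_div_mul_eq_div]
    rw [div_le_iff₀ hΔ₀]
    nlinarith
  · have : |h| ≤ (|h| - β * (1 - Δ)) / Δ := by
      rw [le_div_iff₀ hΔ₀]
      nlinarith
    rw [max_eq_right ((abs_nonneg h).trans this), min_eq_left this]

theorem lipschitzWith_Sfun {Δ : ℝ} (hΔ₀ : 0 < Δ) (hΔ₁ : Δ ≤ 1) (β : ℝ) :
    LipschitzWith (1 / Δ).toNNReal fun h => Sfun Δ h β := by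
  have hK : (1 : ℝ≥0) ≤ (1 / Δ).toNNReal := by
    rw [Real.one_le_toNNReal]
    exact one_le_one_div hΔ₀ hΔ₁
  have hramp : LipschitzWith (1 / Δ).toNNReal fun t : ℝ => (t - β * (1 - Δ)) / Δ := by
    refine LipschitzWith.of_dist_le_mul fun s t => ?_
    rw [Real.coe_toNNReal _ (by positivity), Real.dist_eq, Real.dist_eq, ← sub_div,
      sub_sub_sub_cancel_right, abs_div, abs_of_pos hΔ₀, one_div_mul_eq_div]
  have hclip := (LipschitzWith.id.weaken hK).min (hramp.const_max 0)
  rw [max_self] at hclip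
  simpa only [Function.comp_def, id_eq, mul_one, Real.norm_eq_abs, Sfun_eq_min_max hΔ₀ hΔ₁] using
    hclip.comp (lipschitzWith_one_norm (E := ℝ))

theorem statement15_general (Δ : ℝ) (hΔ : Δ ∈ Set.Ioo (0 : ℝ) 1) (m : ℕ)
    (β : Fin m → ℝ) (z y : EuclideanSpace ℝ (Fin m)) :
    |Real.sqrt (∑ r, Sfun Δ (z r) (β r) ^ 2) -
        Real.sqrt (∑ r, Sfun Δ (y r) (β r) ^ 2)|
      ≤ (1 / Δ) * ‖z - y‖ := by
  have hS : LipschitzWith (1 / Δ).toNNReal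
      fun x : EuclideanSpace ℝ (Fin m) => WithLp.toLp 2 fun r => Sfun Δ (x r) (β r) :=
    PiLp.lipschitzWith_toLp_map (φ := fun r h => Sfun Δ h (β r)) fun r =>
      lipschitzWith_Sfun hΔ.1 hΔ.2.le (β r)
  have hnorm (x : EuclideanSpace ℝ (Fin m)) :
      √(∑ r, Sfun Δ (x r) (β r) ^ 2) = ‖WithLp.toLp 2 fun r => Sfun Δ (x r) (β r)‖ := by
    simp only [EuclideanSpace.norm_eq, Real.norm_eq_abs, sq_abs]
  rw [hnorm, hnorm, ← Real.coe_toNNReal (1 / Δ) (one_div_pos.2 hΔ.1).le, ← dist_eq_norm]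
  exact (abs_norm_sub_norm_le _ _).trans (hS.dist_le_mul z y)

/-- Lemma: `f(·; β)` is `1/Δ`-Lipschitz. -/
theorem statement15 (Δ : ℝ) (hΔ : Δ ∈ Set.Ioo (0 : ℝ) 1) (m : ℕ)
    (β : Fin m → ℝ) (hβ : ∀ r, 0 ≤ β r) (z y : EuclideanSpace ℝ (Fin m)) :
    |Real.sqrt (∑ r, Sfun Δ (z r) (β r) ^ 2) -
        Real.sqrt (∑ r, Sfun Δ (y r) (β r) ^ 2)|
      ≤ (1 / Δ) * ‖z - y‖ :=
  statement15_general Δ hΔ m β z y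
end
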